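/- arXiv:2307.15803 — 4 statements merged into one kernel-verified Lean document; each statement's English description precedes it below -/
import Mathlib

section
/- The set A = {(0,0)} ∪ {(a,b) ∈ ℕ² : a ≥ 2, b ≥ 2, and a+b is even} is a disjoint union of the three unambiguous linear sets L((0,0)), L((2,2),(2,0),(0,2)), and L((3,3),(2,0),(0,2)). -/
lemma key5 (a b : ℤ) (n m : ℕ) :
    ((a, b) : ℤ × ℤ) + n • ((2, 0) : ℤ × ℤ) + m • ((0, 2) : ℤ × ℤ)
      = (a + 2 * n, b + 2 * m) := by
  simp [Prod.ext_iff]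
  constructor <;> ring

/-- the set `{(0,0)} ∪ {(a,b) : a ≥ 2, b ≥ 2, a+b even}` is the disjoint
union of the three unambiguous linear sets `L((0,0))`, `L((2,2),(2,0),(0,2))` and
`L((3,3),(2,0),(0,2))`. -/
theorem stmt_5 :
    ({p : ℤ × ℤ | p = (0, 0) ∨ (2 ≤ p.1 ∧ 2 ≤ p.2 ∧ Even (p.1 + p.2))} =
        ({(0, 0)} : Set (ℤ × ℤ)) ∪
        {x | ∃ n m : ℕ, x = ((2, 2) : ℤ × ℤ) + n • ((2, 0) : ℤ × ℤ) + m • ((0, 2) : ℤ × ℤ)} ∪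
        {x | ∃ n m : ℕ, x = ((3, 3) : ℤ × ℤ) + n • ((2, 0) : ℤ × ℤ) + m • ((0, 2) : ℤ × ℤ)}) ∧
    (Disjoint ({(0, 0)} : Set (ℤ × ℤ))
        {x | ∃ n m : ℕ, x = ((2, 2) : ℤ × ℤ) + n • ((2, 0) : ℤ × ℤ) + m • ((0, 2) : ℤ × ℤ)}) ∧
    (Disjoint ({(0, 0)} : Set (ℤ × ℤ))
        {x | ∃ n m : ℕ, x = ((3, 3) : ℤ × ℤ) + n • ((2, 0) : ℤ × ℤ) + m • ((0, 2) : ℤ × ℤ)}) ∧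
    (Disjoint
        {x : ℤ × ℤ | ∃ n m : ℕ, x = ((2, 2) : ℤ × ℤ) + n • ((2, 0) : ℤ × ℤ) + m • ((0, 2) : ℤ × ℤ)}
        {x | ∃ n m : ℕ, x = ((3, 3) : ℤ × ℤ) + n • ((2, 0) : ℤ × ℤ) + m • ((0, 2) : ℤ × ℤ)}) ∧
    Function.Injective (fun nm : ℕ × ℕ =>
      ((2, 2) : ℤ × ℤ) + nm.1 • ((2, 0) : ℤ × ℤ) + nm.2 • ((0, 2) : ℤ × ℤ)) ∧
    Function.Injective (fun nm : ℕ × ℕ =>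
      ((3, 3) : ℤ × ℤ) + nm.1 • ((2, 0) : ℤ × ℤ) + nm.2 • ((0, 2) : ℤ × ℤ)) := by
  refine ⟨?_, ?_, ?_, ?_, ?_, ?_⟩
  · ext ⟨a, b⟩
    simp only [Set.mem_setOf_eq, Set.mem_union, Set.mem_singleton_iff, key5, Prod.mk.injEq]
    constructor
    · rintro (h | ⟨ha, hb, hab⟩)
      · exact Or.inl (Or.inl (by simpa [Prod.ext_iff] using h))
      · rw [Int.even_iff] at hab
        rcases Int.even_or_odd a with he | ho
        · rw [Int.even_iff] at he
          exact Or.inl (Or.inr ⟨((a - 2) / 2).toNat, ((b - 2) / 2).toNat, by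
            constructor <;> omega⟩)
        · rw [Int.odd_iff] at ho
          exact Or.inr ⟨((a - 3) / 2).toNat, ((b - 3) / 2).toNat, by
            constructor <;> omega⟩
    · rintro ((h | ⟨n, m, h1, h2⟩) | ⟨n, m, h1, h2⟩)
      · exact Or.inl (by simp [Prod.ext_iff, h])
      · refine Or.inr ⟨by omega, by omega, ?_⟩
        rw [Int.even_iff]; omega
      · refine Or.inr ⟨by omega, by omega, ?_⟩
        rw [Int.even_iff]; omega
  · rw [Set.disjoint_left]
    rintro x hx ⟨n, m, h⟩
    rw [Set.mem_singleton_iff] at hx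
    rw [hx, key5, Prod.ext_iff] at h
    simp at h
    omega
  · rw [Set.disjoint_left]
    rintro x hx ⟨n, m, h⟩
    rw [Set.mem_singleton_iff] at hx
    rw [hx, key5, Prod.ext_iff] at h
    simp at h
    omega
  · rw [Set.disjoint_left]
    rintro x ⟨n, m, h⟩ ⟨n', m', h'⟩
    rw [key5] at h h'
    rw [h, Prod.ext_iff] at h'
    simp at h'
    omega
  · rintro ⟨n, m⟩ ⟨n', m'⟩ h
    simp only [key5, Prod.mk.injEq] at h
    have : n = n' ∧ m = m' := by omega
    simp [Prod.ext_iff, this.1, this.2]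
  · rintro ⟨n, m⟩ ⟨n', m'⟩ h
    simp only [key5, Prod.mk.injEq] at h
    have : n = n' ∧ m = m' := by omega
    simp [Prod.ext_iff, this.1, this.2]
end

section
/- For an NFA A with transitions labeled by vectors in ℤ^d, the Parikh image Ψ(A) (the set of sums of transition labels along accepting runs) is a semilinear subset of ℤ^d. -/
/-- A linear set in a commutative monoid. -/
def IsLinearSet' {M : Type*} [AddCommMonoid M] (S : Set M) : Prop :=
  ∃ (b : M) (k : ℕ) (a : Fin k → M),
    S = {x | ∃ n : Fin k → ℕ, x = b + ∑ j : Fin k, n j • a j}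

/-- A semilinear set: a finite union of linear sets. -/
def IsSemilinearSet' {M : Type*} [AddCommMonoid M] (S : Set M) : Prop :=
  ∃ (N : ℕ) (L : Fin N → Set M), (∀ t, IsLinearSet' (L t)) ∧ S = ⋃ t : Fin N, L t

/-- An accepting run of an NFA `(Q, I, F, δ)` over ℤ^d, given as a list of
transitions: all transitions are in `δ`, consecutive transitions match at states,
the first transition starts in `I` and the last one ends in `F`; the empty run is
allowed when `I ∩ F ≠ ∅`. -/
def IsRun {d : ℕ} {Q : Type*} (I F : Set Q) (δ : Set (Q × (Fin d → ℤ) × Q))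
    (r : List (Q × (Fin d → ℤ) × Q)) : Prop :=
  (∀ t ∈ r, t ∈ δ) ∧ r.Chain' (fun s t => s.2.2 = t.1) ∧
  ((r = [] ∧ (I ∩ F).Nonempty) ∨
    (∃ h l, r.head? = some h ∧ r.getLast? = some l ∧ h.1 ∈ I ∧ l.2.2 ∈ F))

/-- The Parikh image of an NFA over ℤ^d: sums of labels over accepting runs. -/
def ParikhImage {d : ℕ} {Q : Type*} (I F : Set Q) (δ : Set (Q × (Fin d → ℤ) × Q)) :
    Set (Fin d → ℤ) :=
  {v | ∃ r, IsRun I F δ r ∧ (r.map (fun t => t.2.1)).sum = v}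

/-!
Semilinear subsets of a commutative monoid are closed under finite unions, sums and additive
closure. Write `R_S(p, q)` for the set of label sums of walks from `p` to `q` all of whose
intermediate states lie in `S`. Cutting a walk at its visits to `k` gives Kleene's
state-elimination formula
`R_{S ∪ {k}}(p, q) = R_S(p, q) ∪ (R_S(p, k) + R_S(k, k)* + R_S(k, q))`,
where `*` is the additive closure (commutativity lets the loops at `k` be collected in any order).
Starting from the finite sets `R_∅(p, q)` (the empty walk and single transitions), induction on
`S` shows that every `R_Q(p, q)` is semilinear, and `Ψ(A)` is the finite union of `R_Q(p, q)` over
`p ∈ I`, `q ∈ F`.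
-/

open Pointwise

theorem isLinearSet'_iff_isLinearSet {M : Type*} [AddCommMonoid M] {S : Set M} :
    IsLinearSet' S ↔ IsLinearSet S := by
  constructor
  · rintro ⟨b, k, a, rfl⟩
    refine ⟨b, Set.range a, Set.finite_range a, ?_⟩
    ext x
    simp [Set.mem_vadd_set, AddSubmonoid.mem_closure_range_iff_of_fintype, eq_comm]
  · rintro ⟨b, P, hP, rfl⟩
    obtain ⟨k, a, -, rfl⟩ := hP.fin_param
    refine ⟨b, k, a, ?_⟩
    ext x
    simp [Set.mem_vadd_set, AddSubmonoid.mem_closure_range_iff_of_fintype, eq_comm]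

theorem isSemilinearSet'_iff_isSemilinearSet {M : Type*} [AddCommMonoid M] {S : Set M} :
    IsSemilinearSet' S ↔ IsSemilinearSet S := by
  simp only [IsSemilinearSet', IsSemilinearSet, isLinearSet'_iff_isLinearSet]
  constructor
  · rintro ⟨N, L, hL, rfl⟩
    exact ⟨Set.range L, Set.finite_range L, Set.forall_mem_range.2 hL,
      (Set.sUnion_range L).symm⟩
  · rintro ⟨T, hT, hL, rfl⟩
    obtain ⟨N, L, -, rfl⟩ := hT.fin_param
    exact ⟨N, L, fun t => hL _ (Set.mem_range_self t), Set.sUnion_range L⟩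

section Walk

variable {Q M : Type*}

inductive IsWalk (δ : Set (Q × M × Q)) : Q → Q → List (Q × M × Q) → Prop
  | nil (p : Q) : IsWalk δ p p []
  | cons {p : Q} {a : M} {q r : Q} {l : List (Q × M × Q)} :
      (p, a, q) ∈ δ → IsWalk δ q r l → IsWalk δ p r ((p, a, q) :: l)

variable {δ : Set (Q × M × Q)}

theorem IsWalk.append {p q r : Q} {l l' : List (Q × M × Q)} (h : IsWalk δ p q l)
    (h' : IsWalk δ q r l') : IsWalk δ p r (l ++ l') := by
  induction h with
  | nil => exact h'
  | cons ht _ ih => exact .cons ht (ih h')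

theorem isWalk_nil_iff {p q : Q} : IsWalk δ p q [] ↔ p = q :=
  ⟨fun h => by cases h; rfl, fun h => h ▸ .nil p⟩

theorem isWalk_cons_iff {p q : Q} {t : Q × M × Q} {l : List (Q × M × Q)} :
    IsWalk δ p q (t :: l) ↔ t.1 = p ∧ t ∈ δ ∧ IsWalk δ t.2.2 q l := by
  constructor
  · rintro (_ | ⟨ht, h⟩)
    exact ⟨rfl, ht, h⟩
  · obtain ⟨p', a, q'⟩ := t
    rintro ⟨rfl, ht, h⟩
    exact .cons ht h

theorem isWalk_cons_iff_isChain {p q : Q} {t : Q × M × Q} {l : List (Q × M × Q)} :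
    IsWalk δ p q (t :: l) ↔ t.1 = p ∧ (∀ x ∈ t :: l, x ∈ δ) ∧
      (t :: l).IsChain (fun s t => s.2.2 = t.1) ∧
      ((t :: l).getLast (List.cons_ne_nil t l)).2.2 = q := by
  induction l generalizing p t with
  | nil => simp [isWalk_cons_iff, isWalk_nil_iff]
  | cons t' l ih =>
    rw [isWalk_cons_iff, ih, List.isChain_cons_cons, List.getLast_cons_cons, List.forall_mem_cons]
    grind

end Walk

theorem isRun_iff_exists_isWalk {d : ℕ} {Q : Type*} {I F : Set Q}
    {δ : Set (Q × (Fin d → ℤ) × Q)} {r : List (Q × (Fin d → ℤ) × Q)} :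
    IsRun I F δ r ↔ ∃ p ∈ I, ∃ q ∈ F, IsWalk δ p q r := by
  cases r with
  | nil => simp [IsRun, List.Chain', isWalk_nil_iff, Set.Nonempty]
  | cons t r =>
    rw [IsRun, List.getLast?_eq_some_getLast (List.cons_ne_nil t r)]
    simp only [List.Chain', reduceCtorEq, false_and, false_or, List.head?_cons, Option.some.injEq,
      exists_and_left, exists_eq_left', isWalk_cons_iff_isChain]
    constructor
    · rintro ⟨hδ, hc, hI, hF⟩
      exact ⟨_, hI, _, hF, rfl, hδ, hc, rfl⟩
    · rintro ⟨_, hI, _, hF, rfl, hδ, hc, rfl⟩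
      exact ⟨hδ, hc, hI, hF⟩

section Reach

variable {Q M : Type*} [AddMonoid M]

/-- `Reach δ S p q v`: some walk from `p` to `q` whose intermediate states all lie in `S` has
label sum `v`. -/
inductive Reach (δ : Set (Q × M × Q)) (S : Set Q) : Q → Q → M → Prop
  | refl (p : Q) : Reach δ S p p 0
  | single {p : Q} {a : M} {q : Q} : (p, a, q) ∈ δ → Reach δ S p q a
  | trans {p k q : Q} {u v : M} :
      Reach δ S p k u → k ∈ S → Reach δ S k q v → Reach δ S p q (u + v)

variable {δ : Set (Q × M × Q)}

theorem Reach.mono {S S' : Set Q} (hS : S ⊆ S') {p q : Q} {v : M} (h : Reach δ S p q v) :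
    Reach δ S' p q v := by
  induction h with
  | refl p => exact .refl p
  | single h => exact .single h
  | trans _ hk _ ih ih' => exact .trans ih (hS hk) ih'

theorem Reach.of_mem_closure {S : Set Q} {k : Q} (hk : k ∈ S) {v : M}
    (hv : v ∈ AddSubmonoid.closure {v | Reach δ S k k v}) : Reach δ S k k v := by
  induction hv using AddSubmonoid.closure_induction with
  | mem v hv => exact hv
  | zero => exact .refl k
  | add u v _ _ hu hv => exact .trans hu hk hv

theorem finite_setOf_reach_empty (hδ : δ.Finite) (p q : Q) : {v | Reach δ ∅ p q v}.Finite := by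
  refine ((hδ.image fun t => t.2.1).insert 0).subset fun v hv => ?_
  induction hv with
  | refl => exact Set.mem_insert 0 _
  | single h => exact Set.mem_insert_of_mem 0 ⟨_, h, rfl⟩
  | trans _ hk => exact hk.elim

theorem IsWalk.reach {p q : Q} {l : List (Q × M × Q)} (h : IsWalk δ p q l) :
    Reach δ Set.univ p q (l.map fun t => t.2.1).sum := by
  induction h with
  | nil p => exact .refl p
  | cons ht _ ih => exact .trans (.single ht) (Set.mem_univ _) ih

theorem Reach.exists_isWalk {S : Set Q} {p q : Q} {v : M} (h : Reach δ S p q v) :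
    ∃ l, IsWalk δ p q l ∧ (l.map fun t => t.2.1).sum = v := by
  induction h with
  | refl p => exact ⟨[], .nil p, rfl⟩
  | single ht => exact ⟨_, .cons ht (.nil _), by simp⟩
  | trans _ _ _ ih ih' =>
    obtain ⟨l, hl, rfl⟩ := ih
    obtain ⟨l', hl', rfl⟩ := ih'
    exact ⟨l ++ l', hl.append hl', by simp⟩

end Reach

section Kleene

variable {Q M : Type*} [AddCommMonoid M]

def kleeneStep (R : Q → Q → Set M) (k p q : Q) : Set M :=
  R p q ∪ (R p k + (AddSubmonoid.closure (R k k) : Set M) + R k q)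

theorem add_subset_kleeneStep {S : Set Q} {R : Q → Q → Set M}
    (hR : ∀ p q, ∀ k ∈ S, R p k + R k q ⊆ R p q) {k k' : Q} (hk' : k' ∈ insert k S)
    (p q : Q) :
    kleeneStep R k p k' + kleeneStep R k k' q ⊆ kleeneStep R k p q := by
  set K := (AddSubmonoid.closure (R k k) : Set M)
  have hR' : ∀ {p q k u v}, k ∈ S → u ∈ R p k → v ∈ R k q → u + v ∈ R p q :=
    fun hk hu hv => hR _ _ _ hk ⟨_, hu, _, hv, rfl⟩
  have hK : ∀ {u}, u ∈ R k k → u ∈ K := fun hu => AddSubmonoid.subset_closure hu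
  rintro _ ⟨u, hu, v, hv, rfl⟩
  rcases Set.mem_insert_iff.1 hk' with rfl | hk'
  · have hleft : ∃ a ∈ R p k', ∃ s ∈ K, u = a + s := by
      rcases hu with hu | ⟨_, ⟨a, ha, s, hs, rfl⟩, b, hb, rfl⟩
      · exact ⟨u, hu, 0, zero_mem _, (add_zero u).symm⟩
      · exact ⟨a, ha, s + b, add_mem hs (hK hb), add_assoc a s b⟩
    have hright : ∃ s ∈ K, ∃ b ∈ R k' q, v = s + b := by
      rcases hv with hv | ⟨_, ⟨a, ha, s, hs, rfl⟩, b, hb, rfl⟩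
      · exact ⟨0, zero_mem _, v, hv, (zero_add v).symm⟩
      · exact ⟨a + s, add_mem (hK ha) hs, b, hb, rfl⟩
    obtain ⟨a, ha, s, hs, rfl⟩ := hleft
    obtain ⟨s', hs', b, hb, rfl⟩ := hright
    exact Or.inr ⟨_, ⟨a, ha, s + s', add_mem hs hs', rfl⟩, b, hb, by ac_rfl⟩
  · rcases hu with hu | ⟨_, ⟨a, ha, s, hs, rfl⟩, b, hb, rfl⟩ <;>
      rcases hv with hv | ⟨_, ⟨a', ha', s', hs', rfl⟩, b', hb', rfl⟩
    · exact Or.inl (hR' hk' hu hv)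
    · exact Or.inr ⟨_, ⟨u + a', hR' hk' hu ha', s', hs', rfl⟩, b', hb', by ac_rfl⟩
    · exact Or.inr ⟨_, ⟨a, ha, s, hs, rfl⟩, b + v, hR' hk' hb hv, by ac_rfl⟩
    · refine Or.inr ⟨_, ⟨a, ha, s + (b + a') + s', ?_, rfl⟩, b', hb', by ac_rfl⟩
      exact add_mem (add_mem hs (hK (hR' hk' hb ha'))) hs'

variable {δ : Set (Q × M × Q)}

theorem setOf_reach_insert (k : Q) (S : Set Q) (p q : Q) :
    {v | Reach δ (insert k S) p q v} = kleeneStep (fun p q => {v | Reach δ S p q v}) k p q := by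
  apply Set.Subset.antisymm
  · intro v hv
    induction hv with
    | refl p => exact Or.inl (.refl p)
    | single h => exact Or.inl (.single h)
    | trans _ hk' _ hu hv =>
      refine add_subset_kleeneStep ?_ hk' _ _ ⟨_, hu, _, hv, rfl⟩
      rintro p q k hk _ ⟨u, hu, v, hv, rfl⟩
      exact hu.trans hk hv
  · have hS := Set.subset_insert k S
    have hk := Set.mem_insert k S
    rintro v (hv | ⟨_, ⟨a, ha, s, hs, rfl⟩, b, hb, rfl⟩)
    · exact hv.mono hS
    · have hs' : Reach δ (insert k S) k k s :=
        .of_mem_closure hk (AddSubmonoid.closure_mono (fun _ h => Reach.mono hS h) hs)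
      exact ((ha.mono hS).trans hk hs').trans hk (hb.mono hS)

theorem isSemilinearSet_setOf_reach (hδ : δ.Finite) {S : Set Q} (hS : S.Finite) (p q : Q) :
    IsSemilinearSet {v | Reach δ S p q v} := by
  induction S, hS using Set.Finite.induction_on generalizing p q with
  | empty => exact .of_finite (finite_setOf_reach_empty hδ p q)
  | @insert k S _ _ ih =>
    rw [setOf_reach_insert]
    exact (ih p q).union (((ih p k).add (ih k k).closure).add (ih k q))

end Kleene

theorem parikhImage_eq_biUnion_reach {d : ℕ} {Q : Type*} (I F : Set Q)
    (δ : Set (Q × (Fin d → ℤ) × Q)) :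
    ParikhImage I F δ = ⋃ p ∈ I, ⋃ q ∈ F, {v | Reach δ Set.univ p q v} := by
  ext v
  simp only [ParikhImage, isRun_iff_exists_isWalk, Set.mem_ofPred_eq, Set.mem_iUnion, exists_prop]
  constructor
  · rintro ⟨r, ⟨p, hp, q, hq, hr⟩, rfl⟩
    exact ⟨p, hp, q, hq, hr.reach⟩
  · rintro ⟨p, hp, q, hq, h⟩
    obtain ⟨r, hr, rfl⟩ := h.exists_isWalk
    exact ⟨r, ⟨p, hp, q, hq, hr⟩, rfl⟩

/-- Parikh's theorem: the Parikh image of an NFA over ℤ^d is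
semilinear. -/
theorem stmt_7 {d : ℕ} {Q : Type*} (hQ : Finite Q)
    (I F : Set Q) (δ : Set (Q × (Fin d → ℤ) × Q)) (hδ : δ.Finite) :
    IsSemilinearSet' (ParikhImage I F δ) := by
  rw [isSemilinearSet'_iff_isSemilinearSet, parikhImage_eq_biUnion_reach]
  exact .biUnion I.toFinite fun p _ => .biUnion F.toFinite fun q _ =>
    isSemilinearSet_setOf_reach hδ Set.univ.toFinite p q
end

section
/- A sequence (c_k) with polynomial growth whose terms satisfy c_k = ∑_{i} a_i(k) k^i for finitely many eventually periodic functions a_i : ℕ → ℚ (i.e., (c_k) is quasi-polynomial) has a rational generating function ∑ c_k z^k. -/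
/-!
Let `L` be a common period of the coefficients `a i` beyond some `N`. The step-`L` difference
operator `Δ_[L]` commutes with multiplication by an `L`-periodic factor and lowers the degree of
`k ↦ k ^ i`, so `Δ_[L]^[m + 1] c` vanishes beyond `N`. As the coefficient of `z ^ (k + n * L)` in
`(1 - z ^ L) ^ n * ∑ c_k z ^ k` is `(Δ_[L]^[n] c) k`, multiplying the generating function by
`(1 - z ^ L) ^ (m + 1)` leaves a polynomial.
-/

open Finset Function fwdDiff

theorem fwdDiff_iter_comp_addMonoidHom {M M' G : Type*} [AddCommMonoid M] [AddCommMonoid M']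
    [AddCommGroup G] (φ : M →+ M') (h : M) (f : M' → G) (n : ℕ) :
    (Δ_[h])^[n] (f ∘ φ) = ((Δ_[φ h])^[n] f) ∘ φ := by
  induction n with
  | zero => rfl
  | succ n ih =>
    ext x
    simp only [iterate_succ_apply', ih, fwdDiff, comp_apply, map_add]

theorem fwdDiff_iter_pow_eq_zero_of_lt' {R : Type*} [CommRing R] (h : R) {j n : ℕ}
    (hjn : j < n) : (Δ_[h])^[n] (fun r : R ↦ r ^ j) = 0 := by
  induction n generalizing j with
  | zero => omega
  | succ n ih =>
    have hΔ : Δ_[h] (fun r : R ↦ r ^ j) =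
        ∑ i ∈ range j, (j.choose i * h ^ (j - i)) • fun r : R ↦ r ^ i := by
      ext r
      simp only [fwdDiff, add_pow, sum_range_succ, Nat.sub_self, pow_zero, mul_one,
        Nat.choose_self, Nat.cast_one, add_sub_cancel_right, Finset.sum_apply, Pi.smul_apply,
        smul_eq_mul]
      exact sum_congr rfl fun i _ ↦ by ring
    rw [iterate_succ_apply, hΔ, fwdDiff_iter_finsetSum]
    exact sum_eq_zero fun i hi ↦ by
      rw [fwdDiff_iter_const_smul, ih (by have := mem_range.1 hi; omega), smul_zero]

theorem fwdDiff_iter_natCast_pow_eq_zero_of_lt {R : Type*} [CommRing R] (L : ℕ) {j n : ℕ}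
    (hjn : j < n) : (Δ_[L])^[n] (fun k : ℕ ↦ (k : R) ^ j) = 0 := by
  have hcast := fwdDiff_iter_comp_addMonoidHom (Nat.castAddMonoidHom R) L (fun r : R ↦ r ^ j) n
  simp only [comp_def, Nat.coe_castAddMonoidHom] at hcast
  rw [hcast, fwdDiff_iter_pow_eq_zero_of_lt' _ hjn]
  rfl

theorem eventually_periodic_of_dvd {α : Type*} {a : ℕ → α} {p L N : ℕ}
    (ha : ∀ k ≥ N, a (k + p) = a k) (hpL : p ∣ L) : ∀ k ≥ N, a (k + L) = a k := by
  obtain ⟨t, rfl⟩ := hpL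
  induction t with
  | zero => simp
  | succ t ih =>
    intro k hk
    rw [mul_add_one, ← add_assoc, ha _ (by omega), ih k hk]

theorem fwdDiff_iter_mul_of_eventually_periodic {R : Type*} [Ring R] {a : ℕ → R} {L N : ℕ}
    (ha : ∀ k ≥ N, a (k + L) = a k) (g : ℕ → R) (n : ℕ) :
    ∀ k ≥ N, (Δ_[L])^[n] (fun j ↦ a j * g j) k = a k * (Δ_[L])^[n] g k := by
  induction n with
  | zero => simp
  | succ n ih =>
    intro k hk
    simp only [iterate_succ_apply', fwdDiff]
    rw [ih k hk, ih (k + L) (by omega), ha k hk, mul_sub]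

theorem fwdDiff_iter_quasiPolynomial_eq_zero {R : Type*} [CommRing R] {n L N : ℕ}
    {a : Fin n → ℕ → R} (ha : ∀ i, ∀ k ≥ N, a i (k + L) = a i k) :
    ∀ k ≥ N, (Δ_[L])^[n] (fun j : ℕ ↦ ∑ i, a i j * (j : R) ^ (i : ℕ)) k = 0 := by
  intro k hk
  rw [← sum_fn, fwdDiff_iter_finsetSum, Finset.sum_apply]
  refine sum_eq_zero fun i _ ↦ ?_
  rw [fwdDiff_iter_mul_of_eventually_periodic (ha i) _ n k hk,
    fwdDiff_iter_natCast_pow_eq_zero_of_lt L i.isLt, Pi.zero_apply, mul_zero]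

namespace PowerSeries

variable {R : Type*} [CommRing R]

theorem coeff_mul_one_sub_X_pow_pow (f : PowerSeries R) (L n k : ℕ) :
    coeff (k + n * L) (f * (1 - X ^ L) ^ n) = (Δ_[L])^[n] (fun j ↦ coeff j f) k := by
  induction n generalizing k with
  | zero => simp
  | succ n ih =>
    rw [pow_succ, ← mul_assoc, mul_sub, mul_one, map_sub,
      show k + (n + 1) * L = (k + L) + n * L by ring, coeff_mul_X_pow', if_pos (by omega),
      show k + L + n * L - L = k + n * L by omega, ih, ih, iterate_succ_apply']
    rfl

theorem coe_trunc_of_coeff_eq_zero {f : PowerSeries R} {n : ℕ}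
    (hf : ∀ k ≥ n, coeff k f = 0) : (trunc n f : PowerSeries R) = f := by
  ext k
  rw [Polynomial.coeff_coe, coeff_trunc]
  split_ifs with hk
  · rfl
  · exact (hf k (not_lt.mp hk)).symm

theorem exists_mul_one_sub_X_pow_pow_eq_polynomial {f : PowerSeries R} {L n N : ℕ}
    (hf : ∀ k ≥ N, (Δ_[L])^[n] (fun j ↦ coeff j f) k = 0) :
    ∃ P : Polynomial R, f * (1 - X ^ L) ^ n = (P : PowerSeries R) := by
  refine ⟨trunc (N + n * L) (f * (1 - X ^ L) ^ n),
    (coe_trunc_of_coeff_eq_zero fun j hj ↦ ?_).symm⟩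
  obtain ⟨k, rfl⟩ : ∃ k, j = k + n * L := ⟨j - n * L, by omega⟩
  rw [coeff_mul_one_sub_X_pow_pow]
  exact hf k (by omega)

end PowerSeries

theorem stmt_14_general (c : ℕ → ℚ) (m : ℕ) (a : Fin (m + 1) → ℕ → ℚ) (p : Fin (m + 1) → ℕ)
    (hp : ∀ i, 1 ≤ p i)
    (hper : ∀ i, ∃ N : ℕ, ∀ k ≥ N, a i (k + p i) = a i k)
    (hc : ∀ k : ℕ, c k = ∑ i : Fin (m + 1), a i k * (k : ℚ) ^ (i : ℕ)) :
    ∃ P Q : Polynomial ℚ, Q.coeff 0 ≠ 0 ∧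
      PowerSeries.mk c * (Q : PowerSeries ℚ) = (P : PowerSeries ℚ) := by
  choose N hN using hper
  set L := ∏ i, p i
  have hL : 0 < L := prod_pos fun i _ ↦ hp i
  have ha : ∀ i, ∀ k ≥ univ.sup N, a i (k + L) = a i k := fun i k hk ↦
    eventually_periodic_of_dvd (hN i) (dvd_prod_of_mem p (mem_univ i)) k
      (le_trans (le_sup (mem_univ i)) hk)
  obtain ⟨P, hP⟩ := PowerSeries.exists_mul_one_sub_X_pow_pow_eq_polynomial
    (f := PowerSeries.mk c) (L := L) (n := m + 1) (N := univ.sup N) (by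
      simpa only [PowerSeries.coeff_mk, ← funext hc] using
        fwdDiff_iter_quasiPolynomial_eq_zero ha)
  refine ⟨P, (1 - Polynomial.X ^ L) ^ (m + 1), ?_, ?_⟩
  · simp [Polynomial.coeff_zero_eq_eval_zero, hL.ne']
  · push_cast
    exact hP

/-- a polynomially bounded quasi-polynomial sequence (with
eventually periodic coefficient functions) has a rational generating function. -/
theorem stmt_14 (c : ℕ → ℚ) (m : ℕ) (a : Fin (m + 1) → ℕ → ℚ) (p : Fin (m + 1) → ℕ)
    (hp : ∀ i, 1 ≤ p i)
    (hper : ∀ i, ∃ N : ℕ, ∀ k ≥ N, a i (k + p i) = a i k)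
    (hc : ∀ k : ℕ, c k = ∑ i : Fin (m + 1), a i k * (k : ℚ) ^ (i : ℕ))
    (hgrowth : ∃ (C : ℚ) (e : ℕ), ∀ k : ℕ, |c k| ≤ C * ((k : ℚ) + 1) ^ e) :
    ∃ P Q : Polynomial ℚ, Q.coeff 0 ≠ 0 ∧
      PowerSeries.mk c * (Q : PowerSeries ℚ) = (P : PowerSeries ℚ) :=
  stmt_14_general c m a p hp hper hc
end

section
/- Let G = (V,E) be a periodic graph with free ℤ^d-action, finite orbit set V_0 = {v_1,...,v_m} of representatives, and finitely many edge orbits. Define the NFA A over ℤ^{d+1} with states V_0, one transition v_s → v_t labeled (x, 1) for each edge orbit whose representative edge goes from v_s to x·v_t, plus a self-loop at each state labeled (0,...,0,1); initial state v_0 ∈ V_0, final state v_i. Then (x_1,...,x_d,y) ∈ Ψ(A) if and only if there exists a path in G from v_0 to (x_1,...,x_d)·v_i of length at most y. -/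
namespace Fin

theorem snoc_add_snoc {n : ℕ} {α : Type*} [Add α] (p q : Fin n → α) (a b : α) :
    (snoc p a : Fin (n + 1) → α) + snoc q b = snoc (p + q) (a + b) := by
  funext i
  refine lastCases ?_ (fun _ => ?_) i <;> simp

theorem snoc_zero_zero {n : ℕ} {α : Type*} [Zero α] :
    (snoc (0 : Fin n → α) 0 : Fin (n + 1) → α) = 0 := by
  funext i
  refine lastCases ?_ (fun _ => ?_) i <;> simp

end Fin

section Runs

variable {d : ℕ} {Q : Type*} {δ : Set (Q × (Fin d → ℤ) × Q)}

theorem isRun_singleton_nil {s t : Q} : IsRun {s} {t} δ [] ↔ s = t := by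
  simp [IsRun, List.Chain', eq_comm]

theorem isRun_singleton_cons {s s' t u : Q} {a : Fin d → ℤ} {r : List (Q × (Fin d → ℤ) × Q)} :
    IsRun {s} {u} δ ((s', a, t) :: r) ↔ s' = s ∧ (s, a, t) ∈ δ ∧ IsRun {t} {u} δ r := by
  rcases r with _ | ⟨⟨t', b, u'⟩, r⟩ <;> simp only [IsRun, List.Chain'] <;> aesop

theorem zero_mem_parikhImage_singleton (s : Q) : 0 ∈ ParikhImage {s} {s} δ :=
  ⟨[], isRun_singleton_nil.2 rfl, rfl⟩

theorem add_mem_parikhImage_singleton {s t u : Q} {a v : Fin d → ℤ} (ha : (s, a, t) ∈ δ)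
    (hv : v ∈ ParikhImage {t} {u} δ) : a + v ∈ ParikhImage {s} {u} δ := by
  obtain ⟨r, hr, rfl⟩ := hv
  exact ⟨(s, a, t) :: r, isRun_singleton_cons.2 ⟨rfl, ha, hr⟩, rfl⟩

end Runs

section PeriodicGraph

variable {V : Type*} {G : SimpleGraph V}

theorem SimpleGraph.Walk.exists_vadd {A : Type*} [VAdd A V]
    (hauto : ∀ (g : A) (u w : V), G.Adj u w → G.Adj (g +ᵥ u) (g +ᵥ w)) (g : A) {u v : V}
    (w : G.Walk u v) : ∃ w' : G.Walk (g +ᵥ u) (g +ᵥ v), w'.length = w.length :=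
  ⟨w.map ⟨(g +ᵥ ·), hauto g _ _⟩, SimpleGraph.Walk.length_map _ _⟩

theorem eq_and_eq_of_vadd_eq_vadd {A : Type*} [AddGroup A] [AddAction A V] {S : Set V}
    (hdistinct : ∀ s ∈ S, ∀ t ∈ S, ∀ x : A, x +ᵥ s = t → s = t ∧ x = 0)
    {s t : V} (hs : s ∈ S) (ht : t ∈ S) {x y : A} (h : x +ᵥ s = y +ᵥ t) : s = t ∧ x = y := by
  have h' : (-y + x) +ᵥ s = t := by rw [← vadd_vadd, h, neg_vadd_vadd]
  obtain ⟨hst, hxy⟩ := hdistinct s hs t ht _ h'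
  exact ⟨hst, (neg_add_eq_zero.mp hxy).symm⟩

variable {d : ℕ} [AddAction (Fin d → ℤ) V] {S : Set V}
  {δ : Set (S × (Fin (d + 1) → ℤ) × S)}

theorem exists_walk_of_mem_transitions
    (hδ : ∀ (s t : S) (a : Fin (d + 1) → ℤ), (s, a, t) ∈ δ ↔
        ((∃ x : Fin d → ℤ, a = Fin.snoc x 1 ∧ G.Adj s.val (x +ᵥ t.val)) ∨
          (s = t ∧ a = Fin.snoc (0 : Fin d → ℤ) 1)))
    {s t : S} {a : Fin (d + 1) → ℤ} (h : (s, a, t) ∈ δ) :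
    ∃ x : Fin d → ℤ, a = Fin.snoc x 1 ∧ ∃ w : G.Walk s (x +ᵥ t.val), w.length ≤ 1 := by
  rcases (hδ s t a).1 h with ⟨x, rfl, hadj⟩ | ⟨rfl, rfl⟩
  · exact ⟨x, rfl, hadj.toWalk, le_rfl⟩
  · exact ⟨0, rfl, SimpleGraph.Walk.nil.copy rfl (zero_vadd _ _).symm, by simp⟩

theorem exists_walk_of_isRun
    (hauto : ∀ (g : Fin d → ℤ) (u w : V), G.Adj u w → G.Adj (g +ᵥ u) (g +ᵥ w))
    (hδ : ∀ (s t : S) (a : Fin (d + 1) → ℤ), (s, a, t) ∈ δ ↔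
        ((∃ x : Fin d → ℤ, a = Fin.snoc x 1 ∧ G.Adj s.val (x +ᵥ t.val)) ∨
          (s = t ∧ a = Fin.snoc (0 : Fin d → ℤ) 1)))
    (r : List (S × (Fin (d + 1) → ℤ) × S)) {s t : S} {x : Fin d → ℤ} {y : ℤ}
    (hr : IsRun {s} {t} δ r) (hsum : (r.map (fun p => p.2.1)).sum = Fin.snoc x y) :
    ∃ w : G.Walk s (x +ᵥ t.val), w.length ≤ y := by
  induction r generalizing s x y with
  | nil =>
    obtain rfl := isRun_singleton_nil.1 hr
    obtain ⟨rfl, rfl⟩ := Fin.snoc_inj.1 (hsum.symm.trans Fin.snoc_zero_zero.symm)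
    exact ⟨SimpleGraph.Walk.nil.copy rfl (zero_vadd _ _).symm, by simp⟩
  | cons p r ih =>
    obtain ⟨s', a, t'⟩ := p
    obtain ⟨rfl, ha, hrest⟩ := isRun_singleton_cons.1 hr
    obtain ⟨x', rfl, w₁, hw₁⟩ := exists_walk_of_mem_transitions hδ ha
    rw [List.map_cons, List.sum_cons] at hsum
    set v := (r.map (fun p => p.2.1)).sum
    obtain ⟨w₂, hw₂⟩ := ih hrest (Fin.snoc_init_self v).symm
    obtain ⟨w₂', hw₂'⟩ := SimpleGraph.Walk.exists_vadd hauto x' w₂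
    rw [← Fin.snoc_init_self v, Fin.snoc_add_snoc, Fin.snoc_inj] at hsum
    obtain ⟨rfl, rfl⟩ := hsum
    refine ⟨(w₁.append w₂').copy rfl (vadd_vadd _ _ _), ?_⟩
    simp only [SimpleGraph.Walk.length_copy, SimpleGraph.Walk.length_append, hw₂']
    push_cast
    omega

theorem snoc_mem_parikhImage_of_walk
    (hauto : ∀ (g : Fin d → ℤ) (u w : V), G.Adj u w → G.Adj (g +ᵥ u) (g +ᵥ w))
    (hrep : ∀ v : V, ∃ (x : Fin d → ℤ) (s : V), s ∈ S ∧ v = x +ᵥ s)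
    (hdistinct : ∀ s ∈ S, ∀ t ∈ S, ∀ x : Fin d → ℤ, x +ᵥ s = t → s = t ∧ x = 0)
    (hδ : ∀ (s t : S) (a : Fin (d + 1) → ℤ), (s, a, t) ∈ δ ↔
        ((∃ x : Fin d → ℤ, a = Fin.snoc x 1 ∧ G.Adj s.val (x +ᵥ t.val)) ∨
          (s = t ∧ a = Fin.snoc (0 : Fin d → ℤ) 1)))
    (n : ℕ) {s t : S} {xs xt : Fin d → ℤ} {u v : V} (w : G.Walk u v)
    (hu : u = xs +ᵥ s.val) (hv : v = xt +ᵥ t.val) (hw : w.length ≤ n) :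
    Fin.snoc (xt - xs) (n : ℤ) ∈ ParikhImage {s} {t} δ := by
  induction n generalizing s xs u with
  | zero =>
    obtain rfl := SimpleGraph.Walk.eq_of_length_eq_zero (Nat.le_zero.1 hw)
    obtain ⟨hst, rfl⟩ := eq_and_eq_of_vadd_eq_vadd hdistinct s.2 t.2 (hu.symm.trans hv)
    rw [Subtype.ext hst, sub_self, Nat.cast_zero, Fin.snoc_zero_zero]
    exact zero_mem_parikhImage_singleton t
  | succ n ih =>
    cases w with
    | nil =>
      have hloop : (s, Fin.snoc (0 : Fin d → ℤ) 1, s) ∈ δ := (hδ s s _).2 (Or.inr ⟨rfl, rfl⟩)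
      have := add_mem_parikhImage_singleton hloop (ih SimpleGraph.Walk.nil hu n.zero_le)
      rwa [Fin.snoc_add_snoc, zero_add, add_comm (1 : ℤ), ← Nat.cast_succ] at this
    | @cons _ q _ hadj w =>
      obtain ⟨xq, sq, hsq, rfl⟩ := hrep q
      have hadj' : G.Adj s ((-xs + xq) +ᵥ sq) := by
        simpa [hu, vadd_vadd] using hauto (-xs) _ _ hadj
      have hstep := (hδ s ⟨sq, hsq⟩ _).2 (Or.inl ⟨_, rfl, hadj'⟩)
      have := add_mem_parikhImage_singleton hstep (ih w rfl (by simpa using hw))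
      rwa [Fin.snoc_add_snoc, neg_add_eq_sub, sub_add_sub_cancel', add_comm (1 : ℤ),
        ← Nat.cast_succ] at this

end PeriodicGraph

theorem stmt_15_general {d : ℕ} {V : Type*} (G : SimpleGraph V)
    [AddAction (Fin d → ℤ) V]
    (hauto : ∀ (g : Fin d → ℤ) (u w : V), G.Adj u w → G.Adj (g +ᵥ u) (g +ᵥ w))
    (V0 : Finset V)
    (hrep : ∀ v : V, ∃ (x : Fin d → ℤ) (s : V), s ∈ V0 ∧ v = x +ᵥ s)
    (hdistinct : ∀ s ∈ V0, ∀ t ∈ V0, ∀ x : Fin d → ℤ, x +ᵥ s = t → s = t ∧ x = 0)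
    (v0 vi : {v : V // v ∈ V0})
    (δ : Set ({v : V // v ∈ V0} × (Fin (d + 1) → ℤ) × {v : V // v ∈ V0}))
    (hδ : ∀ (s t : {v : V // v ∈ V0}) (a : Fin (d + 1) → ℤ),
      (s, a, t) ∈ δ ↔
        ((∃ x : Fin d → ℤ, a = Fin.snoc x 1 ∧ G.Adj s.val (x +ᵥ t.val)) ∨
          (s = t ∧ a = Fin.snoc (0 : Fin d → ℤ) 1)))
    (x : Fin d → ℤ) (y : ℕ) :
    Fin.snoc x (y : ℤ) ∈ ParikhImage {v0} {vi} δ ↔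
      ∃ w : G.Walk v0.val (x +ᵥ vi.val), w.length ≤ y := by
  constructor
  · rintro ⟨r, hr, hsum⟩
    obtain ⟨w, hw⟩ := exists_walk_of_isRun hauto hδ r hr hsum
    exact ⟨w, by exact_mod_cast hw⟩
  · rintro ⟨w, hw⟩
    simpa using snoc_mem_parikhImage_of_walk (S := (V0 : Set V)) hauto hrep hdistinct hδ y w
      (zero_vadd _ _).symm rfl hw

/-- for a periodic graph `G` with orbit representatives `V0`, consider
the NFA over ℤ^{d+1} whose states are `V0`, with a transition `s → t` labelled
`(x, 1)` for each edge orbit going from `s` to `x • t`, plus a self-loop labelled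
`(0, …, 0, 1)` at each state, initial state `v₀` and final state `vᵢ`. Then
`(x, y) ∈ Ψ(A)` iff there is a path in `G` from `v₀` to `x • vᵢ` of length ≤ y. -/
theorem stmt_15 {d : ℕ} {V : Type*} (G : SimpleGraph V)
    [AddAction (Fin d → ℤ) V]
    (hfree : ∀ (g : Fin d → ℤ) (v : V), g +ᵥ v = v → g = 0)
    (hauto : ∀ (g : Fin d → ℤ) (u w : V), G.Adj u w → G.Adj (g +ᵥ u) (g +ᵥ w))
    (V0 : Finset V)
    (hrep : ∀ v : V, ∃ (x : Fin d → ℤ) (s : V), s ∈ V0 ∧ v = x +ᵥ s)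
    (hdistinct : ∀ s ∈ V0, ∀ t ∈ V0, ∀ x : Fin d → ℤ, x +ᵥ s = t → s = t ∧ x = 0)
    (v0 vi : {v : V // v ∈ V0})
    (δ : Set ({v : V // v ∈ V0} × (Fin (d + 1) → ℤ) × {v : V // v ∈ V0}))
    (hδ : ∀ (s t : {v : V // v ∈ V0}) (a : Fin (d + 1) → ℤ),
      (s, a, t) ∈ δ ↔
        ((∃ x : Fin d → ℤ, a = Fin.snoc x 1 ∧ G.Adj s.val (x +ᵥ t.val)) ∨
          (s = t ∧ a = Fin.snoc (0 : Fin d → ℤ) 1)))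
    (x : Fin d → ℤ) (y : ℕ) :
    Fin.snoc x (y : ℤ) ∈ ParikhImage {v0} {vi} δ ↔
      ∃ w : G.Walk v0.val (x +ᵥ vi.val), w.length ≤ y :=
  stmt_15_general G hauto V0 hrep hdistinct v0 vi δ hδ x y
end
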